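/- arXiv:2605.21516 — 3 statements merged into one kernel-verified Lean document; each statement's English description precedes it below -/
import Mathlib

section
/- Let (Ω, 𝒜, P) be a probability space, T a natural number, and for each stage t ∈ {1, …, T} let M_t ≥ 1 be a natural number and B_t an event; write B_{<t} := B₁ ∩ ⋯ ∩ B_{t−1} with B_{<1} = Ω. For each t and each m ∈ {1, …, M_t}, let Z_{t,m} : Ω → ℝ be a random variable, let μ_{t,m}⁻ ≤ μ_{t,m} ≤ μ_{t,m}⁺ be real numbers and σ_{t,m} > 0, and suppose that for all u ≥ 0, P({Z_{t,m} − μ_{t,m} ≥ u} ∩ B_{<t}) ≤ exp(−u²/(2σ_{t,m}²))·P(B_{<t}) and P({μ_{t,m} − Z_{t,m} ≥ u} ∩ B_{<t}) ≤ exp(−u²/(2σ_{t,m}²))·P(B_{<t}). Let ℓ_t ∈ ℝ, ε_t ≥ 0, η_t ≥ 0, and suppose the boundary-loss inequality P(B_t ∩ B_{<t}) ≤ exp(−η_t) · P((⋃_{m=1}^{M_t} {|Z_{t,m} − ℓ_t| ≤ ε_t}) ∩ B_{<t}) holds. Define a_{t,m} := ((dist(ℓ_t, [μ_{t,m}⁻,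 μ_{t,m}⁺]) − ε_t)₊)²/(2σ_{t,m}²) and ρ_t := min_{1 ≤ m ≤ M_t} a_{t,m}. Then P(⋂_{t=1}^T B_t) ≤ exp(−∑_{t=1}^T [η_t + (ρ_t − log M_t)₊]), where (x)₊ := max(x, 0). -/
/-!
Stage by stage, the boundary-loss inequality reduces surviving stage `t` to some attempt landing
within `ε_t` of `ℓ_t`. If `ℓ_t` lies outside the window `[μ⁻, μ⁺]`, such a landing forces a
one-sided deviation of at least `dist(ℓ_t, [μ⁻, μ⁺]) - ε_t` from the mean, which the sub-Gaussian
tail prices at `exp (-a_{t,m})`. A union bound over the `M_t` attempts, capped by `1`, gives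
`exp (-(ρ_t - log M_t)₊)`, and the chain rule over the stages multiplies these factors.
-/

open MeasureTheory Set
open scoped ENNReal

theorem exp_neg_max_sub_log_eq_min {ρ n : ℝ} (hn : 0 < n) :
    Real.exp (-max (ρ - Real.log n) 0) = min 1 (n * Real.exp (-ρ)) := by
  rw [← min_neg_neg, neg_zero, Real.exp_monotone.map_min, Real.exp_zero, min_comm, neg_sub,
    Real.exp_sub, Real.exp_log hn, Real.exp_neg, div_eq_mul_inv]

theorem infDist_Icc_le_sub_of_lt {a b ℓ : ℝ} (hab : a ≤ b) (hℓ : ℓ < a) :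
    Metric.infDist ℓ (Icc a b) ≤ a - ℓ := by
  simpa [Real.dist_eq, abs_of_neg (sub_neg.2 hℓ)] using
    Metric.infDist_le_dist_of_mem (x := ℓ) (left_mem_Icc.2 hab)

theorem infDist_Icc_le_sub_of_gt {a b ℓ : ℝ} (hab : a ≤ b) (hℓ : b < ℓ) :
    Metric.infDist ℓ (Icc a b) ≤ ℓ - b := by
  simpa [Real.dist_eq, abs_of_pos (sub_pos.2 hℓ)] using
    Metric.infDist_le_dist_of_mem (x := ℓ) (right_mem_Icc.2 hab)

/-- The exponent `a_{t,m}` of the paper. -/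
noncomputable def mismatchExponent (ℓ ε a b σ : ℝ) : ℝ :=
  (max (Metric.infDist ℓ (Icc a b) - ε) 0) ^ 2 / (2 * σ ^ 2)

theorem mismatchExponent_nonneg (ℓ ε a b σ : ℝ) : 0 ≤ mismatchExponent ℓ ε a b σ := by
  unfold mismatchExponent
  positivity

section

variable {Ω : Type*} [MeasurableSpace Ω] (P : Measure Ω)

theorem measure_abs_sub_le_inter_le {Z : Ω → ℝ} {a μ b σ ℓ ε : ℝ} {C : Set Ω}
    (ha : a ≤ μ) (hb : μ ≤ b) (hε : 0 ≤ ε)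
    (hup : ∀ u : ℝ, 0 ≤ u → P ({ω | Z ω - μ ≥ u} ∩ C) ≤
      ENNReal.ofReal (Real.exp (-(u ^ 2) / (2 * σ ^ 2))) * P C)
    (hlo : ∀ u : ℝ, 0 ≤ u → P ({ω | μ - Z ω ≥ u} ∩ C) ≤
      ENNReal.ofReal (Real.exp (-(u ^ 2) / (2 * σ ^ 2))) * P C) :
    P ({ω | |Z ω - ℓ| ≤ ε} ∩ C) ≤
      ENNReal.ofReal (Real.exp (-mismatchExponent ℓ ε a b σ)) * P C := by
  set d := Metric.infDist ℓ (Icc a b)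
  rcases le_or_gt d ε with hdε | hεd
  · have : mismatchExponent ℓ ε a b σ = 0 := by simp [mismatchExponent, d, hdε]
    simpa [this] using measure_mono inter_subset_right
  have hmax : max (d - ε) 0 = d - ε := max_eq_left (sub_nonneg.2 hεd.le)
  rw [mismatchExponent, hmax, ← neg_div]
  have hℓ : ℓ ∉ Icc a b := fun h ↦ by
    simp only [d, Metric.infDist_zero_of_mem h] at hεd
    linarith
  rcases lt_or_ge ℓ a with hℓa | haℓ
  · refine (measure_mono (inter_subset_inter_left C fun ω hω ↦ ?_)).trans
      (hlo _ (sub_nonneg.2 hεd.le))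
    have := infDist_Icc_le_sub_of_lt (ha.trans hb) hℓa
    show μ - Z ω ≥ d - ε
    linarith [(abs_le.1 (show |Z ω - ℓ| ≤ ε from hω)).2]
  · have hbℓ : b < ℓ := lt_of_not_ge fun h ↦ hℓ ⟨haℓ, h⟩
    refine (measure_mono (inter_subset_inter_left C fun ω hω ↦ ?_)).trans
      (hup _ (sub_nonneg.2 hεd.le))
    have := infDist_Icc_le_sub_of_gt (ha.trans hb) hbℓ
    show Z ω - μ ≥ d - ε
    linarith [(abs_le.1 (show |Z ω - ℓ| ≤ ε from hω)).1]

theorem measure_biUnion_inter_le_exp_neg_max_sub_log {ι : Type*} {s : Finset ι}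
    (hs : s.Nonempty) {A : ι → Set Ω} {C : Set Ω} {ρ : ℝ}
    (hA : ∀ i ∈ s, P (A i ∩ C) ≤ ENNReal.ofReal (Real.exp (-ρ)) * P C) :
    P ((⋃ i ∈ s, A i) ∩ C) ≤
      ENNReal.ofReal (Real.exp (-max (ρ - Real.log s.card) 0)) * P C := by
  have hunion : P ((⋃ i ∈ s, A i) ∩ C) ≤ ENNReal.ofReal (s.card * Real.exp (-ρ)) * P C :=
    calc P ((⋃ i ∈ s, A i) ∩ C)
        = P (⋃ i ∈ s, A i ∩ C) := by rw [iUnion₂_inter]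
      _ ≤ ∑ i ∈ s, P (A i ∩ C) := measure_biUnion_finset_le _ _
      _ ≤ ∑ _i ∈ s, ENNReal.ofReal (Real.exp (-ρ)) * P C := Finset.sum_le_sum hA
      _ = ENNReal.ofReal (s.card * Real.exp (-ρ)) * P C := by
        rw [Finset.sum_const, nsmul_eq_mul, ← mul_assoc, ENNReal.ofReal_mul (by positivity),
          ENNReal.ofReal_natCast]
  rw [exp_neg_max_sub_log_eq_min (by exact_mod_cast hs.card_pos),
    ENNReal.ofReal_min, ENNReal.ofReal_one, min_mul, one_mul]
  exact le_min (measure_mono inter_subset_right) hunion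

theorem measure_biUnion_Icc_inter_le_exp_neg_max_sInf_sub_log {M : ℕ} (hM : 1 ≤ M)
    {A : ℕ → Set Ω} {C : Set Ω} {a : ℕ → ℝ} (ha : ∀ m, 0 ≤ a m)
    (hA : ∀ m ∈ Finset.Icc 1 M, P (A m ∩ C) ≤ ENNReal.ofReal (Real.exp (-a m)) * P C) :
    P ((⋃ m ∈ Finset.Icc 1 M, A m) ∩ C) ≤
      ENNReal.ofReal (Real.exp (-max (sInf (a '' Icc 1 M) - Real.log M) 0)) * P C := by
  have hbdd : BddBelow (a '' Icc 1 M) := ⟨0, by rintro _ ⟨m, -, rfl⟩; exact ha m⟩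
  simpa using measure_biUnion_inter_le_exp_neg_max_sub_log P ⟨1, Finset.mem_Icc.2 ⟨le_rfl, hM⟩⟩
    fun m hm ↦ (hA m hm).trans <| by
      gcongr
      exact csInf_le hbdd ⟨m, by simpa using hm, rfl⟩

theorem measure_biInter_range_le_prod_mul {B : ℕ → Set Ω} {c : ℕ → ℝ≥0∞} {T : ℕ}
    (hB : ∀ t < T, P (B t ∩ ⋂ s ∈ Finset.range t, B s) ≤ c t * P (⋂ s ∈ Finset.range t, B s)) :
    P (⋂ t ∈ Finset.range T, B t) ≤ (∏ t ∈ Finset.range T, c t) * P univ := by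
  induction T with
  | zero => simp
  | succ T ih =>
    rw [Finset.prod_range_succ, Finset.range_add_one, Finset.set_biInter_insert,
      mul_comm _ (c T), mul_assoc]
    exact (hB T T.lt_add_one).trans
      (mul_le_mul_right (ih fun t ht ↦ hB t (ht.trans T.lt_add_one)) _)

end

theorem granularity_capability_mismatch_bound_general {Ω : Type*} [MeasurableSpace Ω]
    (P : Measure Ω) [IsProbabilityMeasure P]
    (T : ℕ) (M : ℕ → ℕ) (hM : ∀ t < T, 1 ≤ M t)
    (B : ℕ → Set Ω) (Z : ℕ → ℕ → Ω → ℝ)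
    (μm μ μp σ : ℕ → ℕ → ℝ) (ℓ ε η : ℕ → ℝ)
    (hμ1 : ∀ t < T, ∀ m, 1 ≤ m → m ≤ M t → μm t m ≤ μ t m)
    (hμ2 : ∀ t < T, ∀ m, 1 ≤ m → m ≤ M t → μ t m ≤ μp t m)
    (hε : ∀ t < T, 0 ≤ ε t)
    (hup : ∀ t < T, ∀ m, 1 ≤ m → m ≤ M t → ∀ u : ℝ, 0 ≤ u →
      P ({ω | Z t m ω - μ t m ≥ u} ∩ ⋂ s ∈ Finset.range t, B s) ≤
        ENNReal.ofReal (Real.exp (-(u ^ 2) / (2 * (σ t m) ^ 2))) *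
          P (⋂ s ∈ Finset.range t, B s))
    (hlo : ∀ t < T, ∀ m, 1 ≤ m → m ≤ M t → ∀ u : ℝ, 0 ≤ u →
      P ({ω | μ t m - Z t m ω ≥ u} ∩ ⋂ s ∈ Finset.range t, B s) ≤
        ENNReal.ofReal (Real.exp (-(u ^ 2) / (2 * (σ t m) ^ 2))) *
          P (⋂ s ∈ Finset.range t, B s))
    (hbd : ∀ t < T,
      P (B t ∩ ⋂ s ∈ Finset.range t, B s) ≤
        ENNReal.ofReal (Real.exp (-η t)) *
          P ((⋃ m ∈ Finset.Icc 1 (M t), {ω | |Z t m ω - ℓ t| ≤ ε t}) ∩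
              ⋂ s ∈ Finset.range t, B s)) :
    P (⋂ t ∈ Finset.range T, B t) ≤
      ENNReal.ofReal (Real.exp (-(∑ t ∈ Finset.range T,
        (η t +
          max (sInf ((fun m : ℕ =>
              (max (Metric.infDist (ℓ t) (Set.Icc (μm t m) (μp t m)) - ε t) 0) ^ 2 /
                (2 * (σ t m) ^ 2)) '' Set.Icc 1 (M t)) - Real.log (M t)) 0)))) := by
  have hstage : ∀ t < T, P (B t ∩ ⋂ s ∈ Finset.range t, B s) ≤
      ENNReal.ofReal (Real.exp (-(η t + max (sInf ((fun m ↦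
        mismatchExponent (ℓ t) (ε t) (μm t m) (μp t m) (σ t m)) '' Icc 1 (M t)) -
          Real.log (M t)) 0))) * P (⋂ s ∈ Finset.range t, B s) := by
    intro t ht
    have hattempt := measure_biUnion_Icc_inter_le_exp_neg_max_sInf_sub_log P (hM t ht)
      (fun m ↦ mismatchExponent_nonneg _ _ _ _ _) fun m hm ↦
        have ⟨h1, h2⟩ := Finset.mem_Icc.1 hm
        measure_abs_sub_le_inter_le P (ℓ := ℓ t) (hμ1 t ht m h1 h2) (hμ2 t ht m h1 h2) (hε t ht)
          (hup t ht m h1 h2) (hlo t ht m h1 h2)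
    calc _ ≤ _ := hbd t ht
      _ ≤ _ := mul_le_mul_right hattempt _
      _ = _ := by rw [← mul_assoc, ← ENNReal.ofReal_mul (Real.exp_nonneg _), ← Real.exp_add,
        neg_add]
  have := measure_biInter_range_le_prod_mul P hstage
  rwa [measure_univ, mul_one, ← ENNReal.ofReal_prod_of_nonneg fun _ _ ↦ (Real.exp_nonneg _),
    ← Real.exp_sum, Finset.sum_neg_distrib] at this

/-- Granularity–capability mismatch bound (deterministic-regime form): under
conditional sub-Gaussian concentration of the cumulative progress `Z t m` within the
controllability windows `[μm t m, μp t m]` and the boundary-loss inequality, the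
probability of remaining recoverable through all `T` stages is at most
`exp (-∑ t, (η t + (ρ t - log (M t))₊))`, where
`ρ t = min_{1 ≤ m ≤ M t} ((dist (ℓ t) [μm t m, μp t m] - ε t)₊)² / (2 (σ t m)²)`. -/
theorem granularity_capability_mismatch_bound {Ω : Type*} [MeasurableSpace Ω]
    (P : Measure Ω) [IsProbabilityMeasure P]
    (T : ℕ) (M : ℕ → ℕ) (hM : ∀ t < T, 1 ≤ M t)
    (B : ℕ → Set Ω) (Z : ℕ → ℕ → Ω → ℝ)
    (μm μ μp σ : ℕ → ℕ → ℝ) (ℓ ε η : ℕ → ℝ)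
    (hμ1 : ∀ t < T, ∀ m, 1 ≤ m → m ≤ M t → μm t m ≤ μ t m)
    (hμ2 : ∀ t < T, ∀ m, 1 ≤ m → m ≤ M t → μ t m ≤ μp t m)
    (hσ : ∀ t < T, ∀ m, 1 ≤ m → m ≤ M t → 0 < σ t m)
    (hε : ∀ t < T, 0 ≤ ε t) (hη : ∀ t < T, 0 ≤ η t)
    (hup : ∀ t < T, ∀ m, 1 ≤ m → m ≤ M t → ∀ u : ℝ, 0 ≤ u →
      P ({ω | Z t m ω - μ t m ≥ u} ∩ ⋂ s ∈ Finset.range t, B s) ≤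
        ENNReal.ofReal (Real.exp (-(u ^ 2) / (2 * (σ t m) ^ 2))) *
          P (⋂ s ∈ Finset.range t, B s))
    (hlo : ∀ t < T, ∀ m, 1 ≤ m → m ≤ M t → ∀ u : ℝ, 0 ≤ u →
      P ({ω | μ t m - Z t m ω ≥ u} ∩ ⋂ s ∈ Finset.range t, B s) ≤
        ENNReal.ofReal (Real.exp (-(u ^ 2) / (2 * (σ t m) ^ 2))) *
          P (⋂ s ∈ Finset.range t, B s))
    (hbd : ∀ t < T,
      P (B t ∩ ⋂ s ∈ Finset.range t, B s) ≤
        ENNReal.ofReal (Real.exp (-η t)) *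
          P ((⋃ m ∈ Finset.Icc 1 (M t), {ω | |Z t m ω - ℓ t| ≤ ε t}) ∩
              ⋂ s ∈ Finset.range t, B s)) :
    P (⋂ t ∈ Finset.range T, B t) ≤
      ENNReal.ofReal (Real.exp (-(∑ t ∈ Finset.range T,
        (η t +
          max (sInf ((fun m : ℕ =>
              (max (Metric.infDist (ℓ t) (Set.Icc (μm t m) (μp t m)) - ε t) 0) ^ 2 /
                (2 * (σ t m) ^ 2)) '' Set.Icc 1 (M t)) - Real.log (M t)) 0)))) :=
  granularity_capability_mismatch_bound_general P T M hM B Z μm μ μp σ ℓ ε η hμ1 hμ2 hε hup hlo hbd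
end

section
/- Under the hypotheses of the granularity–capability mismatch bound, specialized as follows: each stage requests ℓ_t = L/T for a fixed L > 0, each stage has attempt budget M_t = M, controllability windows [μ_{t,m}⁻, μ_{t,m}⁺] = [m·r⁻, m·r⁺] and variances σ_{t,m}² = m·σ² for one-step window [r⁻, r⁺] and σ > 0, and constant tolerances ε_t = ε ≥ 0 and boundary losses η_t = η ≥ 0. Then P(⋂_{t=1}^T B_t) ≤ exp(−T·[η + (min_{1 ≤ m ≤ M} ((dist(L/T, [m·r⁻, m·r⁺]) − ε)₊)²/(2·m·σ²) − log M)₊]), where (x)₊ := max(x, 0). -/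
/-!
Each stage is bounded separately. To stay recoverable through stage `t` the execution must
reach a point within `ε` of the sub-goal `L/T` after some number `m ≤ M` of attempts. The
target lies at distance `dist(L/T, [m r⁻, m r⁺])` from every admissible mean, so one sub-Gaussian
tail makes each of those `M` events cost `exp (-ρ)`. The union bound over `m`, capped at `1`,
gives `exp (-(ρ - log M)₊)`, and the boundary loss contributes another `exp (-η)`. Chaining the
`T` conditional stage bounds multiplies them.
-/

open MeasureTheory Metric Set Finset

section Window

variable {x a b : ℝ}

lemma infDist_Icc_le_sub_left (hab : a ≤ b) (hx : x ≤ a) : infDist x (Icc a b) ≤ a - x := by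
  simpa [Real.dist_eq, abs_of_nonpos (sub_nonpos.2 hx)] using
    infDist_le_dist_of_mem (x := x) (Set.left_mem_Icc.2 hab)

lemma infDist_Icc_le_sub_right (hab : a ≤ b) (hx : b ≤ x) : infDist x (Icc a b) ≤ x - b := by
  simpa [Real.dist_eq, abs_of_nonneg (sub_nonneg.2 hx)] using
    infDist_le_dist_of_mem (x := x) (Set.right_mem_Icc.2 hab)

end Window

section Measure

variable {Ω : Type*} [MeasurableSpace Ω] (P : Measure Ω)

/-- Only the tail on the side of `x` is used, so no union bound (and no factor `2`) enters. -/
theorem measure_abs_sub_le_inter_le_of_tails {Z : Ω → ℝ} {E : Set Ω} {μ₀ x a b ε s : ℝ}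
    (ha : a ≤ μ₀) (hb : μ₀ ≤ b) (hε : 0 ≤ ε)
    (hup : ∀ u : ℝ, 0 ≤ u →
      P ({ω | Z ω - μ₀ ≥ u} ∩ E) ≤ ENNReal.ofReal (Real.exp (-(u ^ 2) / s)) * P E)
    (hlo : ∀ u : ℝ, 0 ≤ u →
      P ({ω | μ₀ - Z ω ≥ u} ∩ E) ≤ ENNReal.ofReal (Real.exp (-(u ^ 2) / s)) * P E) :
    P ({ω | |Z ω - x| ≤ ε} ∩ E) ≤
      ENNReal.ofReal (Real.exp (-(max (infDist x (Icc a b) - ε) 0 ^ 2 / s))) * P E := by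
  rcases le_or_gt (infDist x (Icc a b)) ε with hd | hd
  · rw [max_eq_right (sub_nonpos.2 hd)]
    simpa using measure_mono (μ := P) inter_subset_right
  have hab : a ≤ b := ha.trans hb
  have hx : x ∉ Icc a b := fun hx => by
    rw [infDist_zero_of_mem hx] at hd
    linarith
  have hu : 0 ≤ infDist x (Icc a b) - ε := by linarith
  rw [max_eq_left hu, ← neg_div]
  rcases not_and_or.1 hx with hxa | hxb
  · have hgap := infDist_Icc_le_sub_left hab (le_of_not_ge hxa)
    refine le_trans (measure_mono (inter_subset_inter_left _ fun ω hω => ?_)) (hlo _ hu)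
    have := (abs_le.1 (show |Z ω - x| ≤ ε from hω)).2
    show μ₀ - Z ω ≥ _
    linarith
  · have hgap := infDist_Icc_le_sub_right hab (le_of_not_ge hxb)
    refine le_trans (measure_mono (inter_subset_inter_left _ fun ω hω => ?_)) (hup _ hu)
    have := (abs_le.1 (show |Z ω - x| ≤ ε from hω)).1
    show Z ω - μ₀ ≥ _
    linarith

theorem measure_biUnion_inter_le_of_forall {ι : Type*} (S : Finset ι) (A : ι → Set Ω)
    (E : Set Ω) (ρ : ℝ)
    (hA : ∀ i ∈ S, P (A i ∩ E) ≤ ENNReal.ofReal (Real.exp (-ρ)) * P E) :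
    P ((⋃ i ∈ S, A i) ∩ E) ≤
      ENNReal.ofReal (Real.exp (-max (ρ - Real.log #S) 0)) * P E := by
  rcases le_or_gt ρ (Real.log #S) with h | h
  · rw [max_eq_right (sub_nonpos.2 h)]
    simpa using measure_mono (μ := P) inter_subset_right
  rw [max_eq_left (sub_pos.2 h).le, iUnion₂_inter]
  calc P (⋃ i ∈ S, A i ∩ E) ≤ ∑ i ∈ S, P (A i ∩ E) := measure_biUnion_finset_le _ _
    _ ≤ ∑ _i ∈ S, ENNReal.ofReal (Real.exp (-ρ)) * P E := sum_le_sum hA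
    _ = ENNReal.ofReal (#S * Real.exp (-ρ)) * P E := by
      rw [sum_const, nsmul_eq_mul, ← mul_assoc, ENNReal.ofReal_mul (Nat.cast_nonneg _),
        ENNReal.ofReal_natCast]
    _ ≤ ENNReal.ofReal (Real.exp (-(ρ - Real.log #S))) * P E := by
      gcongr
      rw [neg_sub, sub_eq_add_neg, Real.exp_add]
      gcongr
      exact Real.le_exp_log _

theorem measure_biInter_range_le_pow (B : ℕ → Set Ω) (c : ENNReal) (n : ℕ)
    (h : ∀ t < n, P (B t ∩ ⋂ s ∈ range t, B s) ≤ c * P (⋂ s ∈ range t, B s)) :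
    P (⋂ t ∈ range n, B t) ≤ c ^ n * P univ := by
  induction n with
  | zero => simp
  | succ n ih =>
    rw [range_add_one, set_biInter_insert, pow_succ', mul_assoc]
    exact (h n n.lt_succ_self).trans
      (mul_le_mul_right (ih fun t ht => h t (ht.trans n.lt_succ_self)) c)

end Measure

theorem uniform_granularity_bound_general {Ω : Type*} [MeasurableSpace Ω]
    (P : Measure Ω) [IsProbabilityMeasure P]
    (T : ℕ) (M : ℕ) (hM : 1 ≤ M)
    (B : ℕ → Set Ω) (Z : ℕ → ℕ → Ω → ℝ) (μ : ℕ → ℕ → ℝ)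
    (L rm rp σ ε η : ℝ) (hε : 0 ≤ ε)
    (hμ1 : ∀ t < T, ∀ m, 1 ≤ m → m ≤ M → (m : ℝ) * rm ≤ μ t m)
    (hμ2 : ∀ t < T, ∀ m, 1 ≤ m → m ≤ M → μ t m ≤ (m : ℝ) * rp)
    (hup : ∀ t < T, ∀ m, 1 ≤ m → m ≤ M → ∀ u : ℝ, 0 ≤ u →
      P ({ω | Z t m ω - μ t m ≥ u} ∩ ⋂ s ∈ Finset.range t, B s) ≤
        ENNReal.ofReal (Real.exp (-(u ^ 2) / (2 * (m : ℝ) * σ ^ 2))) *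
          P (⋂ s ∈ Finset.range t, B s))
    (hlo : ∀ t < T, ∀ m, 1 ≤ m → m ≤ M → ∀ u : ℝ, 0 ≤ u →
      P ({ω | μ t m - Z t m ω ≥ u} ∩ ⋂ s ∈ Finset.range t, B s) ≤
        ENNReal.ofReal (Real.exp (-(u ^ 2) / (2 * (m : ℝ) * σ ^ 2))) *
          P (⋂ s ∈ Finset.range t, B s))
    (hbd : ∀ t < T,
      P (B t ∩ ⋂ s ∈ Finset.range t, B s) ≤
        ENNReal.ofReal (Real.exp (-η)) *
          P ((⋃ m ∈ Finset.Icc 1 M, {ω | |Z t m ω - L / T| ≤ ε}) ∩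
              ⋂ s ∈ Finset.range t, B s)) :
    P (⋂ t ∈ Finset.range T, B t) ≤
      ENNReal.ofReal (Real.exp (-((T : ℝ) *
        (η + max ((Finset.Icc 1 M).inf' (Finset.nonempty_Icc.mpr hM)
            (fun m : ℕ =>
              (max (Metric.infDist (L / T) (Set.Icc ((m : ℝ) * rm) ((m : ℝ) * rp)) - ε) 0) ^ 2 /
                (2 * (m : ℝ) * σ ^ 2)) - Real.log M) 0)))) := by
  set ρ := (Finset.Icc 1 M).inf' (Finset.nonempty_Icc.mpr hM) fun m : ℕ =>
    (max (infDist (L / T) (Set.Icc ((m : ℝ) * rm) ((m : ℝ) * rp)) - ε) 0) ^ 2 / (2 * (m : ℝ) * σ ^ 2)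
  have hstage : ∀ t < T, P (B t ∩ ⋂ s ∈ range t, B s) ≤
      ENNReal.ofReal (Real.exp (-(η + max (ρ - Real.log M) 0))) * P (⋂ s ∈ range t, B s) := by
    intro t ht
    have hnear : ∀ m ∈ Finset.Icc 1 M, P ({ω | |Z t m ω - L / T| ≤ ε} ∩ ⋂ s ∈ range t, B s) ≤
        ENNReal.ofReal (Real.exp (-ρ)) * P (⋂ s ∈ range t, B s) := fun m hm => by
      obtain ⟨hm1, hmM⟩ := Finset.mem_Icc.1 hm
      refine (measure_abs_sub_le_inter_le_of_tails P (hμ1 t ht m hm1 hmM) (hμ2 t ht m hm1 hmM) hε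
        (hup t ht m hm1 hmM) (hlo t ht m hm1 hmM)).trans ?_
      gcongr
      exact inf'_le _ hm
    have hunion := measure_biUnion_inter_le_of_forall P _ _ _ ρ hnear
    rw [Nat.card_Icc, Nat.add_sub_cancel] at hunion
    calc _ ≤ _ := hbd t ht
      _ ≤ _ := mul_le_mul_right hunion _
      _ = _ := by rw [← mul_assoc, ← ENNReal.ofReal_mul (Real.exp_nonneg _), ← Real.exp_add,
        neg_add]
  refine (measure_biInter_range_le_pow P B _ T hstage).trans_eq ?_
  rw [measure_univ, mul_one, ← ENNReal.ofReal_pow (Real.exp_nonneg _), ← Real.exp_nat_mul,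
    mul_neg]

/-- Uniform-decomposition corollary of the granularity–capability mismatch bound:
a task of total latent progress `L` split into `T` equal sub-goals of size `L/T`, with
cumulative controllability windows `[m·r⁻, m·r⁺]`, variances `m·σ²`, attempt budget `M`,
tolerance `ε` and boundary loss `η`, satisfies
`P (⋂ t, B t) ≤ exp (-T·(η + (ρ - log M)₊))` with
`ρ = min_{1 ≤ m ≤ M} ((dist (L/T) [m·r⁻, m·r⁺] - ε)₊)² / (2 m σ²)`. -/
theorem uniform_granularity_bound {Ω : Type*} [MeasurableSpace Ω]
    (P : Measure Ω) [IsProbabilityMeasure P]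
    (T : ℕ) (M : ℕ) (hM : 1 ≤ M)
    (B : ℕ → Set Ω) (Z : ℕ → ℕ → Ω → ℝ) (μ : ℕ → ℕ → ℝ)
    (L rm rp σ ε η : ℝ) (hL : 0 < L) (hr : rm ≤ rp) (hσ : 0 < σ) (hε : 0 ≤ ε) (hη : 0 ≤ η)
    (hμ1 : ∀ t < T, ∀ m, 1 ≤ m → m ≤ M → (m : ℝ) * rm ≤ μ t m)
    (hμ2 : ∀ t < T, ∀ m, 1 ≤ m → m ≤ M → μ t m ≤ (m : ℝ) * rp)
    (hup : ∀ t < T, ∀ m, 1 ≤ m → m ≤ M → ∀ u : ℝ, 0 ≤ u →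
      P ({ω | Z t m ω - μ t m ≥ u} ∩ ⋂ s ∈ Finset.range t, B s) ≤
        ENNReal.ofReal (Real.exp (-(u ^ 2) / (2 * (m : ℝ) * σ ^ 2))) *
          P (⋂ s ∈ Finset.range t, B s))
    (hlo : ∀ t < T, ∀ m, 1 ≤ m → m ≤ M → ∀ u : ℝ, 0 ≤ u →
      P ({ω | μ t m - Z t m ω ≥ u} ∩ ⋂ s ∈ Finset.range t, B s) ≤
        ENNReal.ofReal (Real.exp (-(u ^ 2) / (2 * (m : ℝ) * σ ^ 2))) *
          P (⋂ s ∈ Finset.range t, B s))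
    (hbd : ∀ t < T,
      P (B t ∩ ⋂ s ∈ Finset.range t, B s) ≤
        ENNReal.ofReal (Real.exp (-η)) *
          P ((⋃ m ∈ Finset.Icc 1 M, {ω | |Z t m ω - L / T| ≤ ε}) ∩
              ⋂ s ∈ Finset.range t, B s)) :
    P (⋂ t ∈ Finset.range T, B t) ≤
      ENNReal.ofReal (Real.exp (-((T : ℝ) *
        (η + max ((Finset.Icc 1 M).inf' (Finset.nonempty_Icc.mpr hM)
            (fun m : ℕ =>
              (max (Metric.infDist (L / T) (Set.Icc ((m : ℝ) * rm) ((m : ℝ) * rp)) - ε) 0) ^ 2 /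
                (2 * (m : ℝ) * σ ^ 2)) - Real.log M) 0)))) :=
  uniform_granularity_bound_general P T M hM B Z μ L rm rp σ ε η hε hμ1 hμ2 hup hlo hbd
end

section
/- Let (Ω, 𝒜, Q₀) be a probability space, W : Ω → ℝ a nonnegative integrable function with 0 < ∫ W dQ₀ < ∞, and R ∈ 𝒜 with 0 < Q₀(R) < 1. Define the filtered probability measure Q_W(A) := (∫_A W dQ₀)/(∫ W dQ₀), the conditional average weights W̄_R := (∫_R W dQ₀)/Q₀(R) and W̄_{Rᶜ} := (∫_{Rᶜ} W dQ₀)/Q₀(Rᶜ), assumed to satisfy 0 < W̄_R < ∞ and 0 < W̄_{Rᶜ} < ∞, the base log-odds ω₀ := log(Q₀(R)/Q₀(Rᶜ)), and the retention gap Γ := log W̄_R − log W̄_{Rᶜ}. Let γ ≥ 0. If Γ ≥ γ then Q_W(R) ≥ σ(ω₀ + γ), and if Γ ≤ −γ then Q_W(R) ≤ σ(ω₀ − γ), where σ(u) := 1/(1 + e^{−u}) is the logistic sigmoid. -/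
/-!
Since `W̄_R · Q₀(R) = ∫_R W` and `W̄_{Rᶜ} · Q₀(Rᶜ) = ∫_{Rᶜ} W`, the log-odds of `R` under `Q_W` are
exactly `ω₀ + Γ` (Bayes' rule in log-odds form), so `Q_W(R) = σ(ω₀ + Γ)`; both bounds then follow
from the monotonicity of `σ`.
-/

open MeasureTheory Real

theorem Real.sigmoid_log_sub_log {x y : ℝ} (hx : 0 < x) (hy : 0 < y) :
    sigmoid (log x - log y) = x / (x + y) := by
  rw [sigmoid_def, neg_sub, exp_sub, exp_log hx, exp_log hy]
  field_simp

theorem MeasureTheory.setIntegral_div_integral_eq_sigmoid {Ω : Type*} [MeasurableSpace Ω]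
    {μ : Measure Ω} {W : Ω → ℝ} (hW : Integrable W μ) {R : Set Ω} (hR : MeasurableSet R)
    (hR_pos : 0 < (∫ ω in R, W ω ∂μ) / μ.real R)
    (hRc_pos : 0 < (∫ ω in Rᶜ, W ω ∂μ) / μ.real Rᶜ) :
    (∫ ω in R, W ω ∂μ) / ∫ ω, W ω ∂μ =
      sigmoid (log (μ.real R / μ.real Rᶜ) +
        (log ((∫ ω in R, W ω ∂μ) / μ.real R) - log ((∫ ω in Rᶜ, W ω ∂μ) / μ.real Rᶜ))) := by
  obtain ⟨ha, hp⟩ := (div_pos_iff.mp hR_pos).resolve_right fun h => h.2.not_ge measureReal_nonneg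
  obtain ⟨hb, hq⟩ := (div_pos_iff.mp hRc_pos).resolve_right fun h => h.2.not_ge measureReal_nonneg
  rw [← integral_add_compl hR hW, ← sigmoid_log_sub_log ha hb, log_div hp.ne' hq.ne',
    log_div ha.ne' hp.ne', log_div hb.ne' hq.ne']
  ring_nf

theorem guidance_alignment_quantitative_general {Ω : Type*} [MeasurableSpace Ω]
    (Q : Measure Ω)
    (W : Ω → ℝ) (hWint : Integrable W Q)
    (R : Set Ω) (hR : MeasurableSet R)
    (QW : Set Ω → ℝ)
    (hQW : ∀ A : Set Ω, QW A = (∫ ω in A, W ω ∂Q) / ∫ ω, W ω ∂Q)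
    (WR WRc : ℝ)
    (hWR : WR = (∫ ω in R, W ω ∂Q) / (Q R).toReal)
    (hWRc : WRc = (∫ ω in Rᶜ, W ω ∂Q) / (Q Rᶜ).toReal)
    (hWRpos : 0 < WR) (hWRcpos : 0 < WRc)
    (ω₀ Γ : ℝ)
    (hω₀ : ω₀ = Real.log ((Q R).toReal / (Q Rᶜ).toReal))
    (hΓ : Γ = Real.log WR - Real.log WRc)
    (γ : ℝ) :
    (Γ ≥ γ → QW R ≥ 1 / (1 + Real.exp (-(ω₀ + γ)))) ∧
    (Γ ≤ -γ → QW R ≤ 1 / (1 + Real.exp (-(ω₀ - γ)))) := by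
  have hQW_R : QW R = sigmoid (ω₀ + Γ) := by
    subst hWR hWRc hω₀ hΓ
    exact (hQW R).trans (setIntegral_div_integral_eq_sigmoid hWint hR hWRpos hWRcpos)
  simp only [one_div, ← sigmoid_def, hQW_R, ge_iff_le]
  exact ⟨fun h => sigmoid_le (by linarith), fun h => sigmoid_le (by linarith)⟩

/-- Quantitative guidance–action-space alignment: if the retention gap satisfies
`Γ ≥ γ` then `Q_W(R) ≥ σ(ω₀ + γ)`, and if `Γ ≤ -γ` then `Q_W(R) ≤ σ(ω₀ - γ)`,
where `σ(u) = 1/(1 + e^{-u})` is the logistic sigmoid. -/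
theorem guidance_alignment_quantitative {Ω : Type*} [MeasurableSpace Ω]
    (Q : Measure Ω) [IsProbabilityMeasure Q]
    (W : Ω → ℝ) (hW0 : ∀ ω, 0 ≤ W ω) (hWint : Integrable W Q)
    (hWpos : 0 < ∫ ω, W ω ∂Q)
    (R : Set Ω) (hR : MeasurableSet R) (hR0 : 0 < Q R) (hR1 : Q R < 1)
    (QW : Set Ω → ℝ)
    (hQW : ∀ A : Set Ω, QW A = (∫ ω in A, W ω ∂Q) / ∫ ω, W ω ∂Q)
    (WR WRc : ℝ)
    (hWR : WR = (∫ ω in R, W ω ∂Q) / (Q R).toReal)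
    (hWRc : WRc = (∫ ω in Rᶜ, W ω ∂Q) / (Q Rᶜ).toReal)
    (hWRpos : 0 < WR) (hWRcpos : 0 < WRc)
    (ω₀ Γ : ℝ)
    (hω₀ : ω₀ = Real.log ((Q R).toReal / (Q Rᶜ).toReal))
    (hΓ : Γ = Real.log WR - Real.log WRc)
    (γ : ℝ) (hγ : 0 ≤ γ) :
    (Γ ≥ γ → QW R ≥ 1 / (1 + Real.exp (-(ω₀ + γ)))) ∧
    (Γ ≤ -γ → QW R ≤ 1 / (1 + Real.exp (-(ω₀ - γ)))) :=
  guidance_alignment_quantitative_general Q W hWint R hR QW hQW WR WRc hWR hWRc hWRpos hWRcpos ω₀ Γ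
    hω₀ hΓ γ
end
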